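/- Let E = (E,+,',0,1) be an effect algebra whose induced order satisfies the Ascending Chain Condition, and let → be its set-valued natural implication a→b := {b+m : m ∈ Max L(a',b')}. Define from (E,→,0) a partial operation ⊕ by: a⊕b is defined iff a→b' = {1}, and in that case a⊕b is the unique element of a'→b; put a* := the unique element of a→0 and e := the unique element of 0→0. Then ⊕ = + (a⊕b is defined iff a+b is defined and they are then equal), a* = a' for all a, and e = 1; i.e. the effect algebra recovered from the implication reduct of E equals E. -/
import Mathlib


/-- An effect algebra `(E,+,',0,1)`.  The partial addition is encoded by a total
function `add` together with a definedness predicate `D`; the axioms only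
constrain `add` on defined pairs. -/
structure EffectAlgebra (E : Type*) where
  /-- definedness predicate for the partial addition -/
  D : E → E → Prop
  /-- the (partial) addition -/
  add : E → E → E
  /-- the complementation `x ↦ x'` -/
  compl : E → E
  zero : E
  one : E
  /-- (E1) -/
  comm_def : ∀ {a b : E}, D a b → D b a
  comm : ∀ {a b : E}, D a b → add a b = add b a
  /-- (E2): `(a+b)+c` is defined iff `a+(b+c)` is defined -/
  assoc_def : ∀ a b c : E, (D a b ∧ D (add a b) c) ↔ (D b c ∧ D a (add b c))
  assoc : ∀ a b c : E, D a b → D (add a b) c → add (add a b) c = add a (add b c)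
  /-- (E3): `a + b` is defined and equals `1` iff `b = a'` -/
  orth : ∀ a b : E, (D a b ∧ add a b = one) ↔ b = compl a
  /-- (E4) -/
  one_add : ∀ a : E, D one a → a = zero

/-- The induced order of an effect algebra: `a ≤ b` iff `a + c = b` for some `c`. -/
def EffectAlgebra.le {E : Type*} (A : EffectAlgebra E) (a b : E) : Prop :=
  ∃ c, A.D a c ∧ A.add a c = b

/-- The lower cone `L(a,b) = {x : x ≤ a and x ≤ b}` (w.r.t. the induced order). -/
def EffectAlgebra.lowerCone {E : Type*} (A : EffectAlgebra E) (a b : E) : Set E :=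
  {x | A.le x a ∧ A.le x b}

/-- `Max S`: the set of maximal elements of `S` w.r.t. the induced order. -/
def EffectAlgebra.maxOf {E : Type*} (A : EffectAlgebra E) (S : Set E) : Set E :=
  {x | x ∈ S ∧ ∀ y ∈ S, A.le x y → x = y}

/-- The induced order satisfies the Ascending Chain Condition: there is no
infinite strictly ascending chain. -/
def EffectAlgebra.ACC {E : Type*} (A : EffectAlgebra E) : Prop :=
  ¬ ∃ f : ℕ → E, ∀ n : ℕ, A.le (f n) (f (n + 1)) ∧ f n ≠ f (n + 1)

/-- The set-valued natural implication `a → b := {b + m : m ∈ Max L(a',b')}`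
(each such sum is defined since `m ≤ b'`). -/
def EffectAlgebra.impSet {E : Type*} (A : EffectAlgebra E) (a b : E) : Set E :=
  (fun m => A.add b m) '' A.maxOf (A.lowerCone (A.compl a) (A.compl b))

namespace EffectAlgebra

variable {E : Type*} (A : EffectAlgebra E)

lemma add_compl' (a : E) : A.D a (A.compl a) ∧ A.add a (A.compl a) = A.one :=
  (A.orth a (A.compl a)).mpr rfl

lemma compl_compl' (a : E) : A.compl (A.compl a) = a := by
  have h := A.add_compl' a
  exact ((A.orth (A.compl a) a).mp ⟨A.comm_def h.1, by rw [← A.comm h.1, h.2]⟩).symm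

lemma compl_one' : A.compl A.one = A.zero :=
  A.one_add _ (A.add_compl' A.one).1

lemma compl_zero' : A.compl A.zero = A.one := by
  rw [← A.compl_one', A.compl_compl']

lemma add_zero' (a : E) : A.D a A.zero ∧ A.add a A.zero = a := by
  have h1 := A.add_compl' (A.compl a)
  rw [A.compl_compl'] at h1
  have h0 : A.D A.one A.zero ∧ A.add A.one A.zero = A.one :=
    (A.orth A.one A.zero).mpr A.compl_one'.symm
  have hL : A.D (A.compl a) a ∧ A.D (A.add (A.compl a) a) A.zero :=
    ⟨h1.1, by rw [h1.2]; exact h0.1⟩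
  have hR := (A.assoc_def (A.compl a) a A.zero).mp hL
  have he : A.add (A.compl a) (A.add a A.zero) = A.one := by
    rw [← A.assoc _ _ _ hL.1 hL.2, h1.2, h0.2]
  have := (A.orth (A.compl a) (A.add a A.zero)).mp ⟨hR.2, he⟩
  rw [A.compl_compl'] at this
  exact ⟨hR.1, this⟩

lemma le_refl' (a : E) : A.le a a := ⟨A.zero, A.add_zero' a⟩

lemma le_one' (a : E) : A.le a A.one := ⟨A.compl a, A.add_compl' a⟩

lemma le_trans' {a b c : E} (h1 : A.le a b) (h2 : A.le b c) : A.le a c := by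
  obtain ⟨u, hu, hu2⟩ := h1
  obtain ⟨v, hv, hv2⟩ := h2
  rw [← hu2] at hv hv2
  obtain ⟨huv, hauv⟩ := (A.assoc_def a u v).mp ⟨hu, hv⟩
  exact ⟨A.add u v, hauv, by rw [← A.assoc _ _ _ hu hv, hv2]⟩

lemma cancel' {a b c : E} (h1 : A.D a b) (h2 : A.D a c)
    (h3 : A.add a b = A.add a c) : b = c := by
  have hs := A.add_compl' (A.add a b)
  have hsb := (A.assoc_def a b (A.compl (A.add a b))).mp ⟨h1, hs.1⟩
  have hb : A.add b (A.compl (A.add a b)) = A.compl a :=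
    (A.orth a _).mp ⟨hsb.2, by rw [← A.assoc _ _ _ h1 hs.1, hs.2]⟩
  have hs1 : A.D (A.add a c) (A.compl (A.add a b)) := by rw [← h3]; exact hs.1
  have hsc := (A.assoc_def a c (A.compl (A.add a b))).mp ⟨h2, hs1⟩
  have hc : A.add c (A.compl (A.add a b)) = A.compl a :=
    (A.orth a _).mp ⟨hsc.2, by rw [← A.assoc _ _ _ h2 hs1, ← h3, hs.2]⟩
  -- now show compl b = compl c
  have ha' := A.add_compl' (A.compl a)
  rw [A.compl_compl'] at ha'
  have hb1 : A.D (A.add b (A.compl (A.add a b))) a := by rw [hb]; exact ha'.1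
  have hbb := (A.assoc_def b (A.compl (A.add a b)) a).mp ⟨hsb.1, hb1⟩
  have hb2 : A.add (A.compl (A.add a b)) a = A.compl b :=
    (A.orth b _).mp ⟨hbb.2, by rw [← A.assoc _ _ _ hsb.1 hb1, hb, ha'.2]⟩
  have hc1 : A.D (A.add c (A.compl (A.add a b))) a := by rw [hc]; exact ha'.1
  have hcc := (A.assoc_def c (A.compl (A.add a b)) a).mp ⟨hsc.1, hc1⟩
  have hc2 : A.add (A.compl (A.add a b)) a = A.compl c :=
    (A.orth c _).mp ⟨hcc.2, by rw [← A.assoc _ _ _ hsc.1 hc1, hc, ha'.2]⟩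
  rw [← A.compl_compl' b, ← A.compl_compl' c, ← hb2, ← hc2]

lemma add_eq_zero' {x y : E} (h : A.D x y) (h0 : A.add x y = A.zero) :
    x = A.zero ∧ y = A.zero := by
  have h1 : A.D A.zero A.one ∧ A.add A.zero A.one = A.one :=
    (A.orth A.zero A.one).mpr A.compl_zero'.symm
  have h2 : A.D (A.add x y) A.one := by rw [h0]; exact h1.1
  obtain ⟨hy1, _⟩ := (A.assoc_def x y A.one).mp ⟨h, h2⟩
  have hy0 : y = A.zero := A.one_add y (A.comm_def hy1)
  rw [hy0, (A.add_zero' x).2] at h0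
  exact ⟨h0, hy0⟩

lemma antisymm' {a b : E} (h1 : A.le a b) (h2 : A.le b a) : a = b := by
  obtain ⟨c, hc, hc2⟩ := h1
  obtain ⟨d, hd, hd2⟩ := h2
  rw [← hc2] at hd hd2
  obtain ⟨hcd, hacd⟩ := (A.assoc_def a c d).mp ⟨hc, hd⟩
  have he : A.add a (A.add c d) = A.add a A.zero := by
    rw [← A.assoc _ _ _ hc hd, hd2, (A.add_zero' a).2]
  have hcd0 : A.add c d = A.zero := A.cancel' hacd (A.add_zero' a).1 he
  have hc0 := (A.add_eq_zero' hcd hcd0).1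
  rw [hc0, (A.add_zero' a).2] at hc2
  exact hc2

lemma le_compl_of_D {a b : E} (h : A.D a b) : A.le b (A.compl a) := by
  have hs := A.add_compl' (A.add a b)
  obtain ⟨hb, ha⟩ := (A.assoc_def a b (A.compl (A.add a b))).mp ⟨h, hs.1⟩
  exact ⟨A.compl (A.add a b), hb,
    (A.orth a _).mp ⟨ha, by rw [← A.assoc _ _ _ h hs.1, hs.2]⟩⟩

lemma D_of_le {a b : E} (h : A.le a (A.compl b)) : A.D a b := by
  obtain ⟨c, hc, he⟩ := h
  have hb := A.add_compl' (A.compl b)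
  rw [A.compl_compl'] at hb
  rw [← he] at hb
  obtain ⟨hcb, hacb⟩ := (A.assoc_def a c b).mp ⟨hc, hb.1⟩
  rw [A.comm hcb] at hacb
  exact ((A.assoc_def a b c).mpr ⟨A.comm_def hcb, hacb⟩).1

lemma compl_le_compl' {a b : E} (h : A.le a b) : A.le (A.compl b) (A.compl a) := by
  obtain ⟨c, hc, he⟩ := h
  have hb : A.D (A.add a c) (A.compl b) ∧ A.add (A.add a c) (A.compl b) = A.one := by
    rw [he]; exact A.add_compl' b
  obtain ⟨hcb, ha⟩ := (A.assoc_def a c (A.compl b)).mp ⟨hc, hb.1⟩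
  have h1 : A.add c (A.compl b) = A.compl a :=
    (A.orth a _).mp ⟨ha, by rw [← A.assoc _ _ _ hc hb.1, hb.2]⟩
  exact ⟨c, A.comm_def hcb, by rw [← A.comm hcb, h1]⟩

lemma maxCone_left {a b : E} (h : A.le a b) :
    A.maxOf (A.lowerCone a b) = {a} := by
  ext x
  simp only [Set.mem_singleton_iff]
  constructor
  · rintro ⟨hxS, hmax⟩
    exact hmax a ⟨A.le_refl' a, h⟩ hxS.1
  · rintro rfl
    exact ⟨⟨A.le_refl' _, h⟩, fun y hy hle => A.antisymm' hle hy.1⟩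

lemma maxCone_right {a b : E} (h : A.le b a) :
    A.maxOf (A.lowerCone a b) = {b} := by
  ext x
  simp only [Set.mem_singleton_iff]
  constructor
  · rintro ⟨hxS, hmax⟩
    exact hmax b ⟨h, A.le_refl' b⟩ hxS.2
  · rintro rfl
    exact ⟨⟨h, A.le_refl' _⟩, fun y hy hle => A.antisymm' hle hy.2⟩

end EffectAlgebra

/-- Theorem 5.5 (i): the effect algebra recovered from the set-valued implication
reduct of an effect algebra `E` satisfying the ACC equals `E`: the operation
`a ⊕ b` (defined iff `a → b' = {1}`, with value the unique element of `a' → b`)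
coincides with `a + b`, the complementation `a* ` (the unique element of `a → 0`)
coincides with `a'`, and `e` (the unique element of `0 → 0`) equals `1`. -/
theorem effectAlgebra_from_impSet_reduct_eq_self {E : Type*} (A : EffectAlgebra E)
    (hacc : A.ACC) :
    (∀ a b : E,
      (A.impSet a (A.compl b) = {A.one} ↔ A.D a b) ∧
      (A.D a b → A.impSet (A.compl a) b = {A.add a b})) ∧
    (∀ a : E, A.impSet a A.zero = {A.compl a}) ∧
    A.impSet A.zero A.zero = {A.one} := by
  refine ⟨fun a b => ⟨⟨fun h => ?_, fun h => ?_⟩, fun h => ?_⟩, fun a => ?_, ?_⟩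
  · -- impSet a b' = {1} → D a b
    have h1 : A.one ∈ A.impSet a (A.compl b) := by rw [h]; rfl
    obtain ⟨m, hm, hm1⟩ := h1
    have hmb : A.D (A.compl b) m := A.comm_def (A.D_of_le hm.1.2)
    have hmeq : m = b := by
      have := (A.orth (A.compl b) m).mp ⟨hmb, hm1⟩
      rw [A.compl_compl'] at this
      exact this
    rw [hmeq] at hm
    have hba : A.le b (A.compl a) := hm.1.1
    have := A.compl_le_compl' hba
    rw [A.compl_compl'] at this
    exact A.D_of_le this
  · -- D a b → impSet a b' = {1}
    unfold EffectAlgebra.impSet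
    rw [A.compl_compl', A.maxCone_right (A.le_compl_of_D h), Set.image_singleton,
      ← A.comm (A.add_compl' b).1, (A.add_compl' b).2]
  · -- D a b → impSet a' b = {a+b}
    unfold EffectAlgebra.impSet
    rw [A.compl_compl', A.maxCone_left (A.le_compl_of_D (A.comm_def h)),
      Set.image_singleton, A.comm (A.comm_def h)]
  · -- impSet a 0 = {a'}
    unfold EffectAlgebra.impSet
    rw [A.compl_zero', A.maxCone_left (A.le_one' (A.compl a)), Set.image_singleton,
      A.comm (A.comm_def (A.add_zero' (A.compl a)).1), (A.add_zero' (A.compl a)).2]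
  · -- impSet 0 0 = {1}
    unfold EffectAlgebra.impSet
    rw [A.compl_zero', A.maxCone_left (A.le_one' A.one), Set.image_singleton,
      A.comm (A.comm_def ((A.orth A.one A.zero).mpr A.compl_one'.symm).1),
      ((A.orth A.one A.zero).mpr A.compl_one'.symm).2]
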